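/- arXiv:0902.1394 — 2 statements merged into one kernel-verified Lean document; each statement's English description precedes it below -/
import Mathlib

section
/- Fix integers k ≥ U ≥ 1 and define the sequence n : ℕ → ℕ by n(0) = 1 and, for i ≥ 1: n(i) = ∑_{j=0}^{i−1} n(j) if i ≤ U; n(i) = ∑_{j=1}^{i−1} n(j) if U < i ≤ k; and n(i) = ∑_{j=i−k}^{i−1} n(j) if i > k. Then n(i) = ∑_{j=1}^{U} F_k(i−j+1) = F_k(i) + F_k(i−1) + ⋯ + F_k(i−U+1) for every i ≥ 1. (Here n(i) is the number of new nodes that complete the download of a chunk exactly i time units after its generation at the source, in the multiple unbalanced-tree chunk distribution.) -/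
/-- Value of the k-step Fibonacci sequence at natural indices. -/
def FkNat (k : ℕ) : ℕ → ℕ
  | 0 => 0
  | 1 => 1
  | n + 2 => ∑ j ∈ Finset.range k, FkNat k (n + 1 - j)
decreasing_by omega

/-- The k-step Fibonacci sequence `F_k : ℤ → ℕ`:
`F_k i = 0` for `i ≤ 0`, `F_k 1 = 1`, and `F_k i = ∑_{j=1}^{k} F_k (i - j)` for `i > 1`. -/
def Fk (k : ℕ) (i : ℤ) : ℕ := if i ≤ 0 then 0 else FkNat k i.toNat

/-- The k-step Fibonacci sum `S_k n = ∑_{i=1}^{n} F_k i` (zero for `n ≤ 0`). -/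
noncomputable def Sk (k : ℕ) (n : ℤ) : ℕ := ∑ i ∈ Finset.Icc (1 : ℤ) n, Fk k i

/-!
Both `n` and `i ↦ ∑_{j=1}^{U} F_k(i-j+1)` satisfy `x(i) = ∑_{j=1}^{i-1} x(j) + [i ≤ U]` for
`1 ≤ i ≤ k` and the window recursion `x(i) = ∑_{j=i-k}^{i-1} x(j)` for `i > k`, and these two
rules determine a sequence from `i = 1` on. On the Fibonacci side, summing the shifted copies
`F_k(· - j + 1)` over a window commutes with the sum over `j`, so the recursion of `F_k` is
inherited; for `m ≤ k + 1` the window of `F_k(m)` reaches below index `1`, so `F_k(m)` is the sum of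
all earlier values, plus the initial `1` when `m = 1`, which is where `[i ≤ U]` comes from.
-/

open Finset

lemma Fk_nonpos (k : ℕ) {i : ℤ} (h : i ≤ 0) : Fk k i = 0 := if_pos h

lemma Fk_one (k : ℕ) : Fk k 1 = 1 := by simp [Fk, FkNat]

lemma FkNat_zero (k : ℕ) : FkNat k 0 = 0 := by simp [FkNat]

lemma Fk_natCast (k m : ℕ) : Fk k m = FkNat k m := by
  rcases m with _ | m
  · simp [Fk, FkNat_zero]
  · simp [Fk]

lemma sum_Ico_natCast_add {M : Type*} [AddCommMonoid M] (f : ℤ → M) (a b : ℕ) (c : ℤ) :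
    ∑ j ∈ Ico a b, f (j + c) = ∑ t ∈ Ico ((a : ℤ) + c) (b + c), f t := by
  refine sum_nbij' (fun j ↦ (j : ℤ) + c) (fun t ↦ (t - c).toNat) ?_ ?_ ?_ ?_ (fun _ _ ↦ rfl)
  · intro j hj; simp only [mem_Ico] at *; omega
  · intro t ht; simp only [mem_Ico] at *; omega
  · intro j _; omega
  · intro t ht; simp only [mem_Ico] at ht; omega

lemma Fk_eq_sum_Ico_sub (k : ℕ) {m : ℤ} (hm : 2 ≤ m) :
    Fk k m = ∑ t ∈ Ico (m - k) m, Fk k t := by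
  obtain ⟨p, rfl⟩ : ∃ p : ℕ, m = p + 2 := ⟨(m - 2).toNat, by omega⟩
  have hreflect : ∑ t ∈ Ico ((p : ℤ) + 2 - k) (p + 2), Fk k t
      = ∑ j ∈ range k, Fk k (p + 1 - j) := by
    refine sum_nbij' (fun t ↦ (p + 1 - t).toNat) (fun j ↦ (p : ℤ) + 1 - j) ?_ ?_ ?_ ?_ ?_
    · intro t ht; simp only [mem_Ico, mem_range] at *; omega
    · intro j hj; simp only [mem_Ico, mem_range] at *; omega
    · intro t ht; simp only [mem_Ico] at ht; omega
    · intro j _; omega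
    · intro t ht; simp only [mem_Ico] at ht; congr 1; omega
  rw [hreflect, show (p : ℤ) + 2 = (p + 2 : ℕ) by push_cast; ring, Fk_natCast, FkNat]
  refine sum_congr rfl fun j _ ↦ ?_
  -- past the start of the sequence both sides vanish: `Fk` at a negative index, `FkNat` at `0`
  by_cases hj : j ≤ p + 1
  · rw [show (p : ℤ) + 1 - j = (p + 1 - j : ℕ) by omega, Fk_natCast]
  · rw [Fk_nonpos k (by omega), show p + 1 - j = 0 by omega, FkNat_zero]

lemma sum_Ico_Fk_eq_sum_Ico_one (k : ℕ) {a : ℤ} (ha : a ≤ 1) (m : ℤ) :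
    ∑ t ∈ Ico a m, Fk k t = ∑ t ∈ Ico 1 m, Fk k t := by
  refine (sum_subset (Ico_subset_Ico_left ha) fun t ht ht' ↦ Fk_nonpos k ?_).symm
  simp only [mem_Ico] at ht ht'
  omega

lemma Fk_eq_sum_Ico_one_add_ite (k : ℕ) {m : ℤ} (hm : m ≤ k + 1) :
    Fk k m = ∑ t ∈ Ico 1 m, Fk k t + if m = 1 then 1 else 0 := by
  rcases lt_trichotomy m 1 with hm1 | rfl | hm1
  · rw [Fk_nonpos k (by omega), Ico_eq_empty (by omega), sum_empty, if_neg hm1.ne]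
  · simp [Fk_one]
  · rw [Fk_eq_sum_Ico_sub k (by omega), sum_Ico_Fk_eq_sum_Ico_one k (by omega), if_neg hm1.ne', add_zero]

def lagSumFk (k U i : ℕ) : ℕ := ∑ j ∈ Icc 1 U, Fk k ((i : ℤ) - j + 1)

lemma sum_Ico_lagSumFk (k U a b : ℕ) :
    ∑ i ∈ Ico a b, lagSumFk k U i
      = ∑ j ∈ Icc 1 U, ∑ t ∈ Ico ((a : ℤ) - j + 1) (b - j + 1), Fk k t := by
  unfold lagSumFk
  rw [sum_comm]
  refine sum_congr rfl fun j _ ↦ ?_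
  simp only [sub_add_eq_add_sub, add_sub_assoc, ← sum_Ico_natCast_add]

lemma lagSumFk_eq_sum_Ico_sub {k U i : ℕ} (hUk : U ≤ k) (hki : k < i) :
    lagSumFk k U i = ∑ j ∈ Ico (i - k) i, lagSumFk k U j := by
  rw [sum_Ico_lagSumFk]
  refine sum_congr rfl fun j hj ↦ ?_
  rw [mem_Icc] at hj
  rw [Fk_eq_sum_Ico_sub k (m := (i : ℤ) - j + 1) (by omega)]
  congr 2
  omega

lemma lagSumFk_eq_sum_Ico_one_add_ite {k U i : ℕ} (hi : 1 ≤ i) (hik : i ≤ k) :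
    lagSumFk k U i = ∑ j ∈ Ico 1 i, lagSumFk k U j + if i ≤ U then 1 else 0 := by
  have hlag : ∀ j ∈ Icc 1 U, Fk k ((i : ℤ) - j + 1)
      = ∑ t ∈ Ico ((1 : ℕ) - (j : ℤ) + 1) (i - j + 1), Fk k t + if j = i then 1 else 0 := by
    intro j hj
    rw [mem_Icc] at hj
    rw [sum_Ico_Fk_eq_sum_Ico_one k (by push_cast; omega), Fk_eq_sum_Ico_one_add_ite k (by omega)]
    simp only [show (i : ℤ) - j + 1 = 1 ↔ j = i by omega]
  rw [lagSumFk, sum_congr rfl hlag, sum_add_distrib, ← sum_Ico_lagSumFk, sum_ite_eq']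
  simp [hi]

theorem eq_of_window_recurrence {M : Type*} [AddCommMonoid M] {k : ℕ} (c : ℕ → M) {f g : ℕ → M}
    (hf_le : ∀ i, 1 ≤ i → i ≤ k → f i = ∑ j ∈ Ico 1 i, f j + c i)
    (hf_gt : ∀ i, k < i → f i = ∑ j ∈ Ico (i - k) i, f j)
    (hg_le : ∀ i, 1 ≤ i → i ≤ k → g i = ∑ j ∈ Ico 1 i, g j + c i)
    (hg_gt : ∀ i, k < i → g i = ∑ j ∈ Ico (i - k) i, g j) :
    ∀ i, 1 ≤ i → f i = g i := by
  intro i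
  induction i using Nat.strong_induction_on with
  | _ i ih =>
    intro hi
    have sum_eq : ∀ a, 1 ≤ a → ∑ j ∈ Ico a i, f j = ∑ j ∈ Ico a i, g j := fun a ha ↦
      sum_congr rfl fun j hj ↦ ih j (mem_Ico.1 hj).2 (ha.trans (mem_Ico.1 hj).1)
    rcases le_or_gt i k with hik | hki
    · rw [hf_le i hi hik, hg_le i hi hik, sum_eq 1 le_rfl]
    · rw [hf_gt i hki, hg_gt i hki, sum_eq (i - k) (by omega)]

theorem multiple_trees_counts_eq_fibonacci_general
    (k U : ℕ) (hUk : U ≤ k) (n : ℕ → ℕ)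
    (h0 : n 0 = 1)
    (hsmall : ∀ i, 1 ≤ i → i ≤ U → n i = ∑ j ∈ Finset.range i, n j)
    (hmid : ∀ i, U < i → i ≤ k → n i = ∑ j ∈ Finset.Ico 1 i, n j)
    (hlarge : ∀ i, k < i → n i = ∑ j ∈ Finset.Ico (i - k) i, n j) :
    ∀ i : ℕ, 1 ≤ i → n i = ∑ j ∈ Finset.Icc 1 U, Fk k ((i : ℤ) - (j : ℤ) + 1) := by
  have hn_le : ∀ i, 1 ≤ i → i ≤ k → n i = ∑ j ∈ Ico 1 i, n j + if i ≤ U then 1 else 0 := by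
    intro i hi hik
    split_ifs with hiU
    · rw [hsmall i hi hiU, range_eq_Ico, sum_eq_sum_Ico_succ_bot hi, h0, add_comm]
    · rw [hmid i (by omega) hik, add_zero]
  exact eq_of_window_recurrence _ hn_le hlarge
    (fun _ hi hik ↦ lagSumFk_eq_sum_Ico_one_add_ite hi hik)
    (fun _ hki ↦ lagSumFk_eq_sum_Ico_sub hUk hki)

/-- In the multiple unbalanced-tree chunk distribution with `k ≥ U`, the number `n i`
of new nodes completing the download of a chunk exactly `i` time units after its
generation (`n 0 = 1`, `n i = ∑_{j=0}^{i-1} n j` for `1 ≤ i ≤ U`,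
`n i = ∑_{j=1}^{i-1} n j` for `U < i ≤ k`, and `n i = ∑_{j=i-k}^{i-1} n j` for `i > k`)
equals `∑_{j=1}^{U} F_k (i - j + 1) = F_k(i) + F_k(i-1) + ⋯ + F_k(i-U+1)`
for every `i ≥ 1`. -/
theorem multiple_trees_counts_eq_fibonacci
    (k U : ℕ) (hU : 1 ≤ U) (hUk : U ≤ k) (n : ℕ → ℕ)
    (h0 : n 0 = 1)
    (hsmall : ∀ i, 1 ≤ i → i ≤ U → n i = ∑ j ∈ Finset.range i, n j)
    (hmid : ∀ i, U < i → i ≤ k → n i = ∑ j ∈ Finset.Ico 1 i, n j)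
    (hlarge : ∀ i, k < i → n i = ∑ j ∈ Finset.Ico (i - k) i, n j) :
    ∀ i : ℕ, 1 ≤ i → n i = ∑ j ∈ Finset.Icc 1 U, Fk k ((i : ℤ) - (j : ℤ) + 1) :=
  multiple_trees_counts_eq_fibonacci_general k U hUk n h0 hsmall hmid hlarge
end

section
/- Fix integers k ≥ 1 and t ≥ 0. Then ∑_{i=1}^{t} F_k(i+1) = ∑_{j=1}^{k} S_k(t−j+1). (Consequently, in the case k = U the stream diffusion metric of the unbalanced-tree chunk distribution, N(t) = ∑_{i=1}^{t} F_k(i+1), equals the performance bound ∑_{j=1}^{k} S_k(t−j+1) for every t.) -/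
/-! Both sides grow by `F_k (t + 2)` when `t` increases by one: on the right, each of the `k`
sums `S_k (t - j + 1)` gains the term `F_k (t + 2 - j)`, and these add up to `F_k (t + 2)` by the
defining recurrence. -/

open Finset

lemma Fk_of_nonpos (k : ℕ) {i : ℤ} (hi : i ≤ 0) : Fk k i = 0 := if_pos hi

/-- Truncated subtraction is harmless here because `FkNat k 0 = 0`. -/
lemma Fk_natCast_sub (k a b : ℕ) : Fk k ((a : ℤ) - b) = FkNat k (a - b) := by
  unfold Fk
  split_ifs with h
  · rw [Nat.sub_eq_zero_of_le (by omega), FkNat]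
  · congr
    omega

lemma Fk_eq_sum (k : ℕ) {i : ℤ} (hi : 2 ≤ i) : Fk k i = ∑ j ∈ Icc 1 k, Fk k (i - j) := by
  obtain ⟨n, rfl⟩ : ∃ n : ℕ, i = ((n + 2 : ℕ) : ℤ) := ⟨(i - 2).toNat, by omega⟩
  rw [Fk, if_neg (by omega), Int.toNat_natCast, FkNat, ← Ico_add_one_right_eq_Icc,
    sum_Ico_eq_sum_range, Nat.add_sub_cancel]
  refine sum_congr rfl fun j _ => ?_
  rw [Fk_natCast_sub]
  congr 1
  omega

lemma Sk_of_nonpos (k : ℕ) {n : ℤ} (hn : n ≤ 0) : Sk k n = 0 := by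
  rw [Sk, Icc_eq_empty (by omega), sum_empty]

lemma Sk_eq_Sk_sub_one_add (k : ℕ) (n : ℤ) : Sk k n = Sk k (n - 1) + Fk k n := by
  rcases le_or_gt n 0 with hn | hn
  · rw [Sk_of_nonpos k hn, Sk_of_nonpos k (by omega), Fk_of_nonpos k hn]
  · rw [Sk, Sk, ← insert_Icc_sub_one_right_eq_Icc (by omega : (1 : ℤ) ≤ n),
      sum_insert (by simp), add_comm]

theorem single_tree_metric_eq_bound_general
    (k : ℕ) (t : ℕ) :
    ∑ i ∈ Finset.Icc 1 t, Fk k ((i : ℤ) + 1) =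
      ∑ j ∈ Finset.Icc 1 k, Sk k ((t : ℤ) - (j : ℤ) + 1) := by
  induction t with
  | zero =>
    refine (sum_eq_zero fun j hj => Sk_of_nonpos k ?_).symm
    simp only [mem_Icc] at hj
    omega
  | succ t ih =>
    have step : ∀ j ∈ Icc 1 k, Sk k ((t + 1 : ℕ) - j + 1 : ℤ) =
        Sk k ((t : ℤ) - j + 1) + Fk k ((t + 1 : ℕ) + 1 - j : ℤ) := by
      intro j _
      rw [Sk_eq_Sk_sub_one_add]
      congr 2 <;> push_cast <;> ring
    rw [sum_Icc_succ_top (by omega), ih, sum_congr rfl step, sum_add_distrib,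
      Fk_eq_sum k (by omega)]

/-- In the case `k = U`, the stream diffusion metric of the unbalanced-tree chunk
distribution equals the performance bound:
`∑_{i=1}^{t} F_k (i + 1) = ∑_{j=1}^{k} S_k (t - j + 1)` for every `t ≥ 0`. -/
theorem single_tree_metric_eq_bound
    (k : ℕ) (hk : 1 ≤ k) (t : ℕ) :
    ∑ i ∈ Finset.Icc 1 t, Fk k ((i : ℤ) + 1) =
      ∑ j ∈ Finset.Icc 1 k, Sk k ((t : ℤ) - (j : ℤ) + 1) :=
  single_tree_metric_eq_bound_general k t
end
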